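/- arXiv:2508.07588 — 7 statements merged into one kernel-verified Lean document; each statement's English description precedes it below -/
import Mathlib

section
/- Let ⟨S, ⊕, ∼⟩ be a procedural mixture set in which the equivalence relation is the indifference relation ∼ of a binary relation ≿ on S. If there exist a function U : S → ℝ, q ∈ ℝ, and r > 0 such that U represents ≿ and U(μ a ⊕ (1−μ) b) = μ^r · U(a) + (1−μ)^r · U(b) + q · H_r(μ) for all a, b ∈ S and μ ∈ [0,1], then ≿ is a weak order, is continuous, and satisfies independence. -/
open Real

/-- Binary Tsallis/Shannon entropy `H_r`. -/
noncomputable def Hent (r μ : ℝ) : ℝ :=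
  if r = 1 then -(μ * Real.log μ) - (1 - μ) * Real.log (1 - μ)
  else (1 - μ ^ r - (1 - μ) ^ r) / (r - 1)

/-- Binary Rényi entropy `R_t`. -/
noncomputable def Rent (t α : ℝ) : ℝ :=
  if t = 1 then -(α * Real.log α) - (1 - α) * Real.log (1 - α)
  else Real.log (α ^ t + (1 - α) ^ t) / (1 - t)

/-- A procedural mixture set: `mix μ a b` denotes `μ a ⊕ (1-μ) b`, `approx` is the
equivalence relation `≈`.  The axioms are connectedness, commutativity and associativity. -/
structure IsPMS {S : Type*} (mix : ℝ → S → S → S) (approx : S → S → Prop) : Prop where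
  equiv : Equivalence approx
  connect : ∀ a b : S, approx (mix 1 a b) a
  comm : ∀ μ : ℝ, 0 ≤ μ → μ ≤ 1 → ∀ a b : S, approx (mix μ a b) (mix (1 - μ) b a)
  assoc : ∀ μ lam : ℝ, 0 ≤ μ → μ < 1 → 0 ≤ lam → lam < 1 → μ + lam ≤ 1 →
    ∀ a b c : S,
      approx (mix (1 - lam) (mix (μ / (1 - lam)) a b) c)
        (mix μ a (mix ((1 - lam - μ) / (1 - μ)) b c))

/-- The indifference relation (symmetric part) of `R`. -/
def Indiff {S : Type*} (R : S → S → Prop) (a b : S) : Prop := R a b ∧ R b a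

/-- The strict (asymmetric) part of `R`: `a ≻ b`. -/
def StrictRel {S : Type*} (R : S → S → Prop) (a b : S) : Prop := R a b ∧ ¬ R b a

/-- `R` is a weak order: complete and transitive. -/
def WeakOrder {S : Type*} (R : S → S → Prop) : Prop :=
  (∀ a b : S, R a b ∨ R b a) ∧ ∀ a b c : S, R a b → R b c → R a c

/-- Continuity of `R` with respect to mixture weights. -/
def ContinuousRel {S : Type*} (mix : ℝ → S → S → S) (R : S → S → Prop) : Prop :=
  ∀ a b c : S,
    IsClosed {μ : ℝ | μ ∈ Set.Icc (0 : ℝ) 1 ∧ R (mix μ a b) c} ∧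
    IsClosed {μ : ℝ | μ ∈ Set.Icc (0 : ℝ) 1 ∧ R c (mix μ a b)}

/-- The von Neumann-Morgenstern independence axiom. -/
def IndepAxiom {S : Type*} (mix : ℝ → S → S → S) (R : S → S → Prop) : Prop :=
  ∀ a a' b : S, ∀ μ : ℝ, 0 < μ → μ < 1 →
    (R a a' ↔ R (mix μ a b) (mix μ a' b))

/-- `U` represents `R`: `a ≿ b ↔ U a ≥ U b`. -/
def Represents {S : Type*} (U : S → ℝ) (R : S → S → Prop) : Prop :=
  ∀ a b : S, R a b ↔ U b ≤ U a

/-- `U` is a mixture entropy representation of `R` with parameters `q`, `r`. -/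
def MixEntRep {S : Type*} (mix : ℝ → S → S → S) (R : S → S → Prop)
    (U : S → ℝ) (q r : ℝ) : Prop :=
  Represents U R ∧
    ∀ a b : S, ∀ μ : ℝ, 0 ≤ μ → μ ≤ 1 →
      U (mix μ a b) = μ ^ r * U a + (1 - μ) ^ r * U b + q * Hent r μ

/-- Theorem 1, necessity: on a procedural mixture set whose equivalence
relation is the indifference relation of `R`, if `R` admits a mixture entropy
representation with parameters `q ∈ ℝ`, `r > 0`, then `R` is a weak order, is continuous,
and satisfies independence. -/
theorem axioms_of_mixture_entropy_representation
    {S : Type*} (mix : ℝ → S → S → S) (R : S → S → Prop)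
    (hPMS : IsPMS mix (Indiff R))
    (U : S → ℝ) (q r : ℝ) (hr : 0 < r) (hrep : MixEntRep mix R U q r) :
    WeakOrder R ∧ ContinuousRel mix R ∧ IndepAxiom mix R := by
  obtain ⟨hrepr, hmix⟩ := hrep
  have contRpow : Continuous (fun μ : ℝ => μ ^ r) := by
    rw [continuous_iff_continuousAt]
    exact fun x => Real.continuousAt_rpow_const x r (Or.inr hr.le)
  have contRpow' : Continuous (fun μ : ℝ => (1 - μ) ^ r) :=
    contRpow.comp (continuous_const.sub continuous_id)
  have contHent : Continuous (Hent r) := by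
    unfold Hent
    by_cases h : r = 1
    · simp only [h, if_true]
      have h1 : Continuous fun μ : ℝ => (1 - μ) * Real.log (1 - μ) :=
        Real.continuous_mul_log.comp (continuous_const.sub continuous_id)
      exact Real.continuous_mul_log.neg.sub h1
    · simp only [h, if_false]
      exact ((continuous_const.sub contRpow).sub contRpow').div_const _
  refine ⟨⟨fun a b => ?_, fun a b c hab hbc => ?_⟩, fun a b c => ?_, ?_⟩
  · rcases le_total (U a) (U b) with h | h
    · exact Or.inr ((hrepr b a).2 h)
    · exact Or.inl ((hrepr a b).2 h)
  · exact (hrepr a c).2 (le_trans ((hrepr b c).1 hbc) ((hrepr a b).1 hab))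
  · set f : ℝ → ℝ := fun μ => μ ^ r * U a + (1 - μ) ^ r * U b + q * Hent r μ with hf
    have contf : Continuous f :=
      ((contRpow.mul continuous_const).add (contRpow'.mul continuous_const)).add
        (continuous_const.mul contHent)
    constructor
    · have : {μ : ℝ | μ ∈ Set.Icc (0 : ℝ) 1 ∧ R (mix μ a b) c}
          = Set.Icc (0 : ℝ) 1 ∩ f ⁻¹' Set.Ici (U c) := by
        ext μ
        simp only [Set.mem_setOf_eq, Set.mem_inter_iff, Set.mem_preimage, Set.mem_Ici,
          Set.mem_Icc]
        constructor
        · rintro ⟨⟨h0, h1⟩, hR⟩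
          refine ⟨⟨h0, h1⟩, ?_⟩
          have := (hrepr (mix μ a b) c).1 hR
          rwa [hmix a b μ h0 h1] at this
        · rintro ⟨⟨h0, h1⟩, hfc⟩
          refine ⟨⟨h0, h1⟩, (hrepr (mix μ a b) c).2 ?_⟩
          rwa [hmix a b μ h0 h1]
      rw [this]
      exact isClosed_Icc.inter (isClosed_Ici.preimage contf)
    · have : {μ : ℝ | μ ∈ Set.Icc (0 : ℝ) 1 ∧ R c (mix μ a b)}
          = Set.Icc (0 : ℝ) 1 ∩ f ⁻¹' Set.Iic (U c) := by
        ext μ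
        simp only [Set.mem_setOf_eq, Set.mem_inter_iff, Set.mem_preimage, Set.mem_Iic,
          Set.mem_Icc]
        constructor
        · rintro ⟨⟨h0, h1⟩, hR⟩
          refine ⟨⟨h0, h1⟩, ?_⟩
          have := (hrepr c (mix μ a b)).1 hR
          rwa [hmix a b μ h0 h1] at this
        · rintro ⟨⟨h0, h1⟩, hfc⟩
          refine ⟨⟨h0, h1⟩, (hrepr c (mix μ a b)).2 ?_⟩
          rwa [hmix a b μ h0 h1]
      rw [this]
      exact isClosed_Icc.inter (isClosed_Iic.preimage contf)
  · intro a a' b μ h0 h1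
    have hpos : 0 < μ ^ r := Real.rpow_pos_of_pos h0 r
    rw [hrepr a a', hrepr (mix μ a b) (mix μ a' b),
      hmix a b μ h0.le h1.le, hmix a' b μ h0.le h1.le]
    constructor
    · intro h
      gcongr
    · intro h
      have : μ ^ r * U a' ≤ μ ^ r * U a := by linarith
      exact le_of_mul_le_mul_left this hpos
end

section
/- Let ⟨S, ⊕, ∼⟩ be a procedural mixture set whose equivalence relation is the indifference relation ∼ of a binary relation ≿ on S that is a weak order, is continuous, and satisfies independence. Then ≿ is coseparable: for all a, a', b, b', ā, ā', b̄, b̄' ∈ S and all μ, μ̄ ∈ [0,1], the three indifferences μ a ⊕ (1−μ) b ∼ μ̄ ā ⊕ (1−μ̄) b̄, μ a' ⊕ (1−μ) b ∼ μ̄ ā' ⊕ (1−μ̄) b̄, and μ a ⊕ (1−μ) b' ∼ μ̄ ā ⊕ (1−μ̄) b̄' jointly imply μ a' ⊕ (1−μ) b' ∼ μ̄ ā' ⊕ (1−μ̄) b̄'. -/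
open Real

/-!
The medial law `½(μ p ⊕ (1-μ) q) ⊕ ½(μ r ⊕ (1-μ) s) ∼ μ(½ p ⊕ ½ r) ⊕ (1-μ)(½ q ⊕ ½ s)`, a
consequence of associativity, commutativity and independence, lets one swap `a` and `a'` between
two mixtures of the same weight:
`½(μ a' ⊕ (1-μ) b) ⊕ ½(μ a ⊕ (1-μ) b') ∼ ½(μ a ⊕ (1-μ) b) ⊕ ½(μ a' ⊕ (1-μ) b')`.
Swapping on both sides and substituting the three hypotheses gives
`½(μ̄ ā ⊕ (1-μ̄) b̄) ⊕ ½(μ a' ⊕ (1-μ) b') ∼ ½(μ̄ ā ⊕ (1-μ̄) b̄) ⊕ ½(μ̄ ā' ⊕ (1-μ̄) b̄')`,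
and independence cancels the common first component.
-/

section

variable {S : Type*} {mix : ℝ → S → S → S}

namespace IsPMS

variable {approx : S → S → Prop}

theorem mix_zero (h : IsPMS mix approx) (a b : S) : approx (mix 0 a b) b := by
  have hc := h.comm 0 le_rfl zero_le_one a b
  rw [sub_zero] at hc
  exact h.equiv.trans hc (h.connect b a)

theorem mix_half_comm (h : IsPMS mix approx) (a b : S) :
    approx (mix (1 / 2) a b) (mix (1 / 2) b a) := by
  have hc := h.comm (1 / 2) (by norm_num) (by norm_num) a b
  rwa [show (1 : ℝ) - 1 / 2 = 1 / 2 by norm_num] at hc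

/-- The associativity axiom with `α = 1 - λ` and `β = μ / (1 - λ)`; the weights are given by
division-free equations, so that call sites only have to check field identities. -/
theorem mix_assoc {α β ν γ : ℝ} (h : IsPMS mix approx) (hα0 : 0 < α) (hα1 : α ≤ 1)
    (hβ0 : 0 ≤ β) (hβ1 : β ≤ 1) (hν : ν = α * β) (hν1 : ν < 1)
    (hγ : γ * (1 - ν) = α * (1 - β)) (a b c : S) :
    approx (mix α (mix β a b) c) (mix ν a (mix γ b c)) := by
  subst hν
  obtain rfl : γ = (α - α * β) / (1 - α * β) := by
    rw [eq_div_iff (by linarith), hγ]; ring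
  have hassoc := h.assoc (α * β) (1 - α) (mul_nonneg hα0.le hβ0) hν1 (by linarith)
    (by linarith) (by nlinarith) a b c
  rwa [sub_sub_cancel, mul_div_cancel_left₀ _ hα0.ne'] at hassoc

end IsPMS

variable {R : S → S → Prop} {μ : ℝ}

theorem indiff_mix_congr (hPMS : IsPMS mix (Indiff R)) (hInd : IndepAxiom mix R)
    (hμ0 : 0 < μ) (hμ1 : μ < 1) {c c' d d' : S} (hc : Indiff R c c') (hd : Indiff R d d') :
    Indiff R (mix μ c d) (mix μ c' d') := by
  have hleft : Indiff R (mix μ c d) (mix μ c' d) :=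
    ⟨(hInd c c' d μ hμ0 hμ1).mp hc.1, (hInd c' c d μ hμ0 hμ1).mp hc.2⟩
  have hswap : Indiff R (mix (1 - μ) d c') (mix (1 - μ) d' c') :=
    ⟨(hInd d d' c' (1 - μ) (by linarith) (by linarith)).mp hd.1,
      (hInd d' d c' (1 - μ) (by linarith) (by linarith)).mp hd.2⟩
  exact hPMS.equiv.trans hleft <| hPMS.equiv.trans (hPMS.comm μ hμ0.le hμ1.le c' d) <|
    hPMS.equiv.trans hswap (hPMS.equiv.symm (hPMS.comm μ hμ0.le hμ1.le c' d'))

theorem indiff_of_indiff_mix_right (hPMS : IsPMS mix (Indiff R)) (hInd : IndepAxiom mix R)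
    (hμ0 : 0 < μ) (hμ1 : μ < 1) {c d d' : S} (h : Indiff R (mix μ c d) (mix μ c d')) :
    Indiff R d d' := by
  have hswap : Indiff R (mix (1 - μ) d c) (mix (1 - μ) d' c) :=
    hPMS.equiv.trans (hPMS.equiv.symm (hPMS.comm μ hμ0.le hμ1.le c d)) <|
      hPMS.equiv.trans h (hPMS.comm μ hμ0.le hμ1.le c d')
  exact ⟨(hInd d d' c (1 - μ) (by linarith) (by linarith)).mpr hswap.1,
    (hInd d' d c (1 - μ) (by linarith) (by linarith)).mpr hswap.2⟩

/-- Both sides reassociate to `mix (μ / 2) p (mix (μ / (2 - μ)) r (mix (1 / 2) q s))`. -/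
theorem indiff_mix_half_medial_of_pos_of_lt_one (hPMS : IsPMS mix (Indiff R))
    (hInd : IndepAxiom mix R) (hμ0 : 0 < μ) (hμ1 : μ < 1) (p q r s : S) :
    Indiff R (mix (1 / 2) (mix μ p q) (mix μ r s))
      (mix μ (mix (1 / 2) p r) (mix (1 / 2) q s)) := by
  have h2μ : (2 : ℝ) - μ ≠ 0 := by linarith
  have hγ0 : 0 ≤ (1 - μ) / (2 - μ) := div_nonneg (by linarith) (by linarith)
  have hγ1 : (1 - μ) / (2 - μ) < 1 := (div_lt_one (by linarith)).mpr (by linarith)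
  have hδ0 : 0 < μ / (2 - μ) := div_pos hμ0 (by linarith)
  have hδ1 : μ / (2 - μ) < 1 := (div_lt_one (by linarith)).mpr (by linarith)
  have : Trans (Indiff R) (Indiff R) (Indiff R) := ⟨hPMS.equiv.trans⟩
  have hinner : Indiff R (mix ((1 - μ) / (2 - μ)) q (mix μ r s))
      (mix (μ / (2 - μ)) r (mix (1 / 2) q s)) :=
    calc Indiff R _ (mix (1 - (1 - μ) / (2 - μ)) (mix μ r s) q) := hPMS.comm _ hγ0 hγ1.le _ _
      Indiff R _ (mix (μ / (2 - μ)) r (mix (1 / 2) s q)) :=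
        hPMS.mix_assoc (by linarith) (by linarith) hμ0.le hμ1.le (by field_simp; ring) hδ1
          (by field_simp; ring) r s q
      Indiff R _ (mix (μ / (2 - μ)) r (mix (1 / 2) q s)) :=
        indiff_mix_congr hPMS hInd hδ0 hδ1 (hPMS.equiv.refl r) (hPMS.mix_half_comm s q)
  calc Indiff R _ (mix (μ / 2) p (mix ((1 - μ) / (2 - μ)) q (mix μ r s))) :=
        hPMS.mix_assoc (by norm_num) (by norm_num) hμ0.le hμ1.le (by ring) (by linarith)
          (by field_simp) p q _
    Indiff R _ (mix (μ / 2) p (mix (μ / (2 - μ)) r (mix (1 / 2) q s))) :=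
        indiff_mix_congr hPMS hInd (by linarith) (by linarith) (hPMS.equiv.refl p) hinner
    Indiff R _ _ := hPMS.equiv.symm <|
        hPMS.mix_assoc hμ0 hμ1.le (by norm_num) (by norm_num) (by ring) (by linarith)
          (by field_simp; ring) p r _

theorem indiff_mix_half_exchange (hPMS : IsPMS mix (Indiff R)) (hInd : IndepAxiom mix R)
    (hμ0 : 0 ≤ μ) (hμ1 : μ ≤ 1) (a a' b b' : S) :
    Indiff R (mix (1 / 2) (mix μ a' b) (mix μ a b'))
      (mix (1 / 2) (mix μ a b) (mix μ a' b')) := by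
  have half0 : (0 : ℝ) < 1 / 2 := by norm_num
  have half1 : (1 : ℝ) / 2 < 1 := by norm_num
  have : Trans (Indiff R) (Indiff R) (Indiff R) := ⟨hPMS.equiv.trans⟩
  rcases hμ0.eq_or_lt with rfl | hμ0
  · calc Indiff R _ (mix (1 / 2) b b') :=
          indiff_mix_congr hPMS hInd half0 half1 (hPMS.mix_zero a' b) (hPMS.mix_zero a b')
      Indiff R _ _ := hPMS.equiv.symm <|
          indiff_mix_congr hPMS hInd half0 half1 (hPMS.mix_zero a b) (hPMS.mix_zero a' b')
  rcases hμ1.eq_or_lt with rfl | hμ1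
  · calc Indiff R _ (mix (1 / 2) a' a) :=
          indiff_mix_congr hPMS hInd half0 half1 (hPMS.connect a' b) (hPMS.connect a b')
      Indiff R _ (mix (1 / 2) a a') := hPMS.mix_half_comm a' a
      Indiff R _ _ := hPMS.equiv.symm <|
          indiff_mix_congr hPMS hInd half0 half1 (hPMS.connect a b) (hPMS.connect a' b')
  calc Indiff R _ (mix μ (mix (1 / 2) a' a) (mix (1 / 2) b b')) :=
        indiff_mix_half_medial_of_pos_of_lt_one hPMS hInd hμ0 hμ1 a' b a b'
    Indiff R _ (mix μ (mix (1 / 2) a a') (mix (1 / 2) b b')) :=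
        indiff_mix_congr hPMS hInd hμ0 hμ1 (hPMS.mix_half_comm a' a) (hPMS.equiv.refl _)
    Indiff R _ _ := hPMS.equiv.symm <|
        indiff_mix_half_medial_of_pos_of_lt_one hPMS hInd hμ0 hμ1 a b a' b'

end

theorem coseparability_general
    {S : Type*} (mix : ℝ → S → S → S) (R : S → S → Prop)
    (hPMS : IsPMS mix (Indiff R))
    (hInd : IndepAxiom mix R) :
    ∀ (a a' b b' abar abar' bbar bbar' : S) (μ μbar : ℝ),
      0 ≤ μ → μ ≤ 1 → 0 ≤ μbar → μbar ≤ 1 →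
      Indiff R (mix μ a b) (mix μbar abar bbar) →
      Indiff R (mix μ a' b) (mix μbar abar' bbar) →
      Indiff R (mix μ a b') (mix μbar abar bbar') →
      Indiff R (mix μ a' b') (mix μbar abar' bbar') := by
  intro a a' b b' abar abar' bbar bbar' μ μbar hμ0 hμ1 hμbar0 hμbar1 hab ha'b hab'
  have half0 : (0 : ℝ) < 1 / 2 := by norm_num
  have half1 : (1 : ℝ) / 2 < 1 := by norm_num
  have : Trans (Indiff R) (Indiff R) (Indiff R) := ⟨hPMS.equiv.trans⟩
  refine indiff_of_indiff_mix_right hPMS hInd half0 half1 (c := mix μbar abar bbar) ?_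
  calc Indiff R _ (mix (1 / 2) (mix μ a b) (mix μ a' b')) :=
        indiff_mix_congr hPMS hInd half0 half1 (hPMS.equiv.symm hab) (hPMS.equiv.refl _)
    Indiff R _ (mix (1 / 2) (mix μ a' b) (mix μ a b')) :=
        hPMS.equiv.symm (indiff_mix_half_exchange hPMS hInd hμ0 hμ1 a a' b b')
    Indiff R _ (mix (1 / 2) (mix μbar abar' bbar) (mix μbar abar bbar')) :=
        indiff_mix_congr hPMS hInd half0 half1 ha'b hab'
    Indiff R _ _ := indiff_mix_half_exchange hPMS hInd hμbar0 hμbar1 abar abar' bbar bbar'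

/-- Lemma: coseparability: under the weak order, continuity and
independence axioms on a procedural mixture set whose equivalence relation is the
indifference relation of `R`, the relation is coseparable. -/
theorem coseparability
    {S : Type*} (mix : ℝ → S → S → S) (R : S → S → Prop)
    (hPMS : IsPMS mix (Indiff R))
    (hWO : WeakOrder R) (hCont : ContinuousRel mix R) (hInd : IndepAxiom mix R) :
    ∀ (a a' b b' abar abar' bbar bbar' : S) (μ μbar : ℝ),
      0 ≤ μ → μ ≤ 1 → 0 ≤ μbar → μbar ≤ 1 →
      Indiff R (mix μ a b) (mix μbar abar bbar) →
      Indiff R (mix μ a' b) (mix μbar abar' bbar) →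
      Indiff R (mix μ a b') (mix μbar abar bbar') →
      Indiff R (mix μ a' b') (mix μbar abar' bbar') :=
  coseparability_general mix R hPMS hInd
end

section
/- Let ⟨S, ⊕, ∼⟩ be a procedural mixture set whose equivalence relation is the indifference relation ∼ of a binary relation ≿ on S, let U : S → ℝ represent ≿, and suppose there are functions A, B : [0,1] → ℝ with U(μ a ⊕ (1−μ) b) = A(μ)·U(a) + A(1−μ)·U(b) + B(μ) + B(1−μ) for all a, b ∈ S and μ ∈ [0,1]. If there exist a, a' ∈ S with U(a) ≠ U(a'), then A is multiplicative: A(λ·μ) = A(λ)·A(μ) for all λ, μ ∈ [0,1]. -/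
open Real

/-- if `U` represents `R` on a procedural mixture set and satisfies
`U(μ a ⊕ (1−μ) b) = A(μ)·U(a) + A(1−μ)·U(b) + B(μ) + B(1−μ)`, and `U` is nonconstant,
then `A` is multiplicative on `[0,1]`. -/
theorem A_multiplicative
    {S : Type*} (mix : ℝ → S → S → S) (R : S → S → Prop)
    (hPMS : IsPMS mix (Indiff R))
    (U : S → ℝ) (A B : ℝ → ℝ)
    (hU : Represents U R)
    (hAB : ∀ a b : S, ∀ μ : ℝ, 0 ≤ μ → μ ≤ 1 →
      U (mix μ a b) = A μ * U a + A (1 - μ) * U b + B μ + B (1 - μ))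
    (hne : ∃ a a' : S, U a ≠ U a') :
    ∀ lam μ : ℝ, 0 ≤ lam → lam ≤ 1 → 0 ≤ μ → μ ≤ 1 →
      A (lam * μ) = A lam * A μ := by
  obtain ⟨a0, a1, hne⟩ := hne
  have hne' : U a0 - U a1 ≠ 0 := sub_ne_zero.mpr hne
  have hUeq : ∀ x y : S, Indiff R x y → U x = U y := by
    rintro x y ⟨h1, h2⟩
    exact le_antisymm ((hU y x).1 h2) ((hU x y).1 h1)
  -- A 1 = 1
  have hA1 : A 1 = 1 := by
    have e0 := hUeq _ _ (hPMS.connect a0 a0)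
    have e1 := hUeq _ _ (hPMS.connect a1 a0)
    rw [hAB a0 a0 1 zero_le_one le_rfl] at e0
    rw [hAB a1 a0 1 zero_le_one le_rfl] at e1
    norm_num at e0 e1
    have h : (A 1 - 1) * (U a0 - U a1) = 0 := by linear_combination e0 - e1
    rcases mul_eq_zero.mp h with h | h
    · linarith [sub_eq_zero.mp h]
    · exact absurd h hne'
  -- A 0 = 0
  have hA0 : A 0 = 0 := by
    have e0 := hUeq _ _ (hPMS.connect a0 a0)
    have e1 := hUeq _ _ (hPMS.connect a0 a1)
    rw [hAB a0 a0 1 zero_le_one le_rfl] at e0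
    rw [hAB a0 a1 1 zero_le_one le_rfl] at e1
    norm_num at e0 e1
    have h : A 0 * (U a0 - U a1) = 0 := by linear_combination e0 - e1
    rcases mul_eq_zero.mp h with h | h
    · exact h
    · exact absurd h hne'
  -- key associativity consequence
  have key : ∀ s t : ℝ, 0 < s → s ≤ 1 → 0 ≤ t → t ≤ 1 → s * t < 1 →
      ∀ a : S, U (mix s (mix t a a0) a0)
        = U (mix (s * t) a (mix ((s - s * t) / (1 - s * t)) a0 a0)) := by
    intro s t hs hs1 ht ht1 hst a
    have h := hPMS.assoc (s * t) (1 - s) (by positivity) hst (by linarith) (by linarith)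
      (by nlinarith) a a0 a0
    rw [show (1 : ℝ) - (1 - s) = s from by ring] at h
    rw [show s * t / s = t from by field_simp] at h
    exact hUeq _ _ h
  intro lam μ hl0 hl1 hm0 hm1
  rcases eq_or_lt_of_le hl0 with hl | hl
  · rw [← hl]; simp [hA0]
  rcases eq_or_lt_of_le (show lam * μ ≤ 1 by nlinarith) with h1 | h1
  · have hlam1 : lam = 1 := by nlinarith
    have hmu1 : μ = 1 := by nlinarith
    rw [hlam1, hmu1]; norm_num [hA1]
  -- main case : 0 < lam, lam * μ < 1
  have E : ∀ a : S,
      A lam * (A μ * U a + A (1 - μ) * U a0 + B μ + B (1 - μ))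
        + A (1 - lam) * U a0 + B lam + B (1 - lam)
      = A (lam * μ) * U a
        + A (1 - lam * μ) * U (mix ((lam - lam * μ) / (1 - lam * μ)) a0 a0)
        + B (lam * μ) + B (1 - lam * μ) := by
    intro a
    have h := key lam μ hl hl1 hm0 hm1 h1 a
    rw [hAB (mix μ a a0) a0 lam hl0 hl1, hAB a a0 μ hm0 hm1,
      hAB a _ (lam * μ) (by positivity) h1.le] at h
    linear_combination h
  have h' : (A (lam * μ) - A lam * A μ) * (U a0 - U a1) = 0 := by
    linear_combination E a1 - E a0
  rcases mul_eq_zero.mp h' with h'' | h''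
  · linarith [sub_eq_zero.mp h'']
  · exact absurd h'' hne'
end

section
/- For every r > 0 and all real x, y ∈ [0,1) with x + y ≤ 1, the binary Tsallis entropy satisfies the functional equation (1−x)^r · H_r(y/(1−x)) + H_r(x) = (1−y)^r · H_r(x/(1−y)) + H_r(y). -/
open Real

private lemma mul_log_div' (a b : ℝ) (hb : b ≠ 0) :
    a * Real.log (a / b) = a * Real.log a - a * Real.log b := by
  rcases eq_or_ne a 0 with h | h
  · simp [h]
  · rw [Real.log_div h hb]; ring

private lemma shannon_side (x y : ℝ) (hx1 : x < 1) :
    (1 - x) ^ (1 : ℝ) * Hent 1 (y / (1 - x)) + Hent 1 x =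
      -(x * Real.log x) - y * Real.log y - (1 - x - y) * Real.log (1 - x - y) := by
  have hux : (0:ℝ) < 1 - x := by linarith
  have h1 : (1:ℝ) - y / (1 - x) = (1 - x - y) / (1 - x) := by field_simp
  rw [Real.rpow_one]
  simp only [Hent, eq_self_iff_true, if_true, h1]
  have e1 : (1 - x) * (y / (1 - x) * Real.log (y / (1 - x)))
      = y * Real.log y - y * Real.log (1 - x) := by
    rw [← mul_assoc, mul_div_cancel₀ _ hux.ne', mul_log_div' _ _ hux.ne']
  have e2 : (1 - x) * ((1 - x - y) / (1 - x) * Real.log ((1 - x - y) / (1 - x)))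
      = (1 - x - y) * Real.log (1 - x - y) - (1 - x - y) * Real.log (1 - x) := by
    rw [← mul_assoc, mul_div_cancel₀ _ hux.ne', mul_log_div' _ _ hux.ne']
  linear_combination (-1 : ℝ) * e1 - e2

private lemma tsallis_side (r x y : ℝ) (hr1 : r ≠ 1)
    (hx1 : x < 1) (hy0 : 0 ≤ y) (hxy : x + y ≤ 1) :
    (1 - x) ^ r * Hent r (y / (1 - x)) + Hent r x =
      (1 - x ^ r - y ^ r - (1 - x - y) ^ r) / (r - 1) := by
  have hux : (0:ℝ) < 1 - x := by linarith
  have h1 : (1:ℝ) - y / (1 - x) = (1 - x - y) / (1 - x) := by field_simp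
  have h2 : (1 - x) ^ r * (y / (1 - x)) ^ r = y ^ r := by
    rw [← Real.mul_rpow hux.le (by positivity), mul_div_cancel₀ _ hux.ne']
  have h3 : (1 - x) ^ r * ((1 - x - y) / (1 - x)) ^ r = (1 - x - y) ^ r := by
    have hs : (0:ℝ) ≤ 1 - x - y := by linarith
    rw [← Real.mul_rpow hux.le (by positivity), mul_div_cancel₀ _ hux.ne']
  have hr' : r - 1 ≠ 0 := sub_ne_zero.mpr hr1
  simp only [Hent, if_neg hr1, h1]
  linear_combination (-h2 - h3) / (r - 1)

/-- the binary Tsallis entropy satisfies the fundamental functional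
equation `(1−x)^r · H_r(y/(1−x)) + H_r(x) = (1−y)^r · H_r(x/(1−y)) + H_r(y)`. -/
theorem tsallis_functional_equation
    (r x y : ℝ) (hr : 0 < r)
    (hx0 : 0 ≤ x) (hx1 : x < 1) (hy0 : 0 ≤ y) (hy1 : y < 1) (hxy : x + y ≤ 1) :
    (1 - x) ^ r * Hent r (y / (1 - x)) + Hent r x =
      (1 - y) ^ r * Hent r (x / (1 - y)) + Hent r y := by
  rcases eq_or_ne r 1 with hr1 | hr1
  · subst hr1
    rw [shannon_side x y hx1, shannon_side y x hy1]
    ring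
  · rw [tsallis_side r x y hr1 hx1 hy0 hxy,
        tsallis_side r y x hr1 hy1 hx0 (by linarith)]
    ring
end

section
/- Let ⟨S, ⊕, ∼⟩ be a procedural mixture set whose equivalence relation is the indifference relation ∼ of a binary relation ≿ on S that is a weak order and is continuous. Endow S with the topology generated by the subbasis consisting of all strict upper contour sets {b ∈ S : b ≻ a} and all strict lower contour sets {b ∈ S : a ≻ b} for a ∈ S, where ≻ is the asymmetric part of ≿. Then S is a connected topological space. -/
open Real

/-- The subbasis of strict upper and strict lower contour sets of the asymmetric part of `R`. -/
def OrderSubbasis {S : Type*} (R : S → S → Prop) : Set (Set S) :=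
  {s | ∃ a : S, s = {b : S | StrictRel R b a}} ∪ {s | ∃ a : S, s = {b : S | StrictRel R a b}}

/-- Lemma: connectedness: a procedural mixture set whose equivalence
relation is the indifference relation of a continuous weak order `R` is topologically
connected under the order topology. -/
theorem pms_order_topology_connected
    {S : Type*} [Nonempty S] (mix : ℝ → S → S → S) (R : S → S → Prop)
    (hPMS : IsPMS mix (Indiff R))
    (hWO : WeakOrder R) (hCont : ContinuousRel mix R) :
    @ConnectedSpace S (TopologicalSpace.generateFrom (OrderSubbasis R)) := by
  classical
  letI T : TopologicalSpace S := TopologicalSpace.generateFrom (OrderSubbasis R)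
  obtain ⟨hcomp, htrans⟩ := hWO
  -- indifferent points are topologically inseparable
  have hclos : ∀ x y : S, Indiff R x y → y ∈ closure ({x} : Set S) := by
    intro x y hxy
    have key : ∀ o : Set S, TopologicalSpace.GenerateOpen (OrderSubbasis R) o →
        y ∈ o → x ∈ o := by
      intro o ho
      induction ho with
      | basic s hs =>
          intro hy
          rcases hs with ⟨c, rfl⟩ | ⟨c, rfl⟩
          · exact ⟨htrans x y c hxy.1 hy.1, fun h => hy.2 (htrans c x y h hxy.1)⟩
          · exact ⟨htrans c y x hy.1 hxy.2, fun h => hy.2 (htrans y x c hxy.2 h)⟩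
      | univ => exact fun _ => trivial
      | inter s t _ _ ih1 ih2 => exact fun h => ⟨ih1 h.1, ih2 h.2⟩
      | sUnion C _ ih => rintro ⟨s, hs, hys⟩; exact ⟨s, hs, ih s hs hys⟩
    refine mem_closure_iff.mpr fun o ho hyo => ?_
    exact ⟨x, key o ho hyo, rfl⟩
  have hcc : ∀ x y : S, Indiff R x y → y ∈ connectedComponent x := by
    intro x y hxy
    exact (isPreconnected_singleton.closure).subset_connectedComponent
      (subset_closure rfl) (hclos x y hxy)
  haveI : ConnectedSpace (Set.Icc (0:ℝ) 1) :=
    Subtype.connectedSpace (isConnected_Icc zero_le_one)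
  refine connectedSpace_iff_connectedComponent.mpr ⟨Classical.arbitrary S, ?_⟩
  apply Set.eq_univ_of_forall
  intro b
  set a := Classical.arbitrary S with ha
  -- the mixture path from b to a
  set g : (Set.Icc (0:ℝ) 1) → S := fun μ => mix μ.1 a b with hgdef
  have hg : Continuous g := by
    rw [continuous_generateFrom_iff]
    rintro s (⟨c, rfl⟩ | ⟨c, rfl⟩)
    · have hcl := (hCont a b c).2
      have heq : g ⁻¹' {x : S | StrictRel R x c} =
          (Subtype.val) ⁻¹' {μ : ℝ | μ ∈ Set.Icc (0:ℝ) 1 ∧ R c (mix μ a b)}ᶜ := by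
        ext ⟨μ, hμ⟩
        simp only [Set.mem_preimage, Set.mem_setOf_eq, Set.mem_compl_iff, hgdef]
        constructor
        · intro h hc; exact h.2 hc.2
        · intro h
          exact ⟨(hcomp _ _).resolve_left (fun hc => h ⟨hμ, hc⟩),
            fun hc => h ⟨hμ, hc⟩⟩
      rw [heq]
      exact (hcl.isOpen_compl).preimage continuous_subtype_val
    · have hcl := (hCont a b c).1
      have heq : g ⁻¹' {x : S | StrictRel R c x} =
          (Subtype.val) ⁻¹' {μ : ℝ | μ ∈ Set.Icc (0:ℝ) 1 ∧ R (mix μ a b) c}ᶜ := by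
        ext ⟨μ, hμ⟩
        simp only [Set.mem_preimage, Set.mem_setOf_eq, Set.mem_compl_iff, hgdef]
        constructor
        · intro h hc; exact h.2 hc.2
        · intro h
          exact ⟨(hcomp _ _).resolve_right (fun hc => h ⟨hμ, hc⟩),
            fun hc => h ⟨hμ, hc⟩⟩
      rw [heq]
      exact (hcl.isOpen_compl).preimage continuous_subtype_val
  have hrange : IsConnected (Set.range g) := isConnected_range hg
  have h1mem : mix 1 a b ∈ Set.range g := ⟨⟨1, by norm_num⟩, rfl⟩
  have h0mem : mix 0 a b ∈ Set.range g := ⟨⟨0, by norm_num⟩, rfl⟩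
  -- a ~ mix 1 a b
  have hconn1 : Indiff R (mix 1 a b) a := hPMS.connect a b
  -- mix 0 a b ~ b
  have hcomm0 : Indiff R (mix 0 a b) (mix 1 b a) := by
    have := hPMS.comm 0 le_rfl zero_le_one a b
    rwa [sub_zero] at this
  have hconn0 : Indiff R (mix 0 a b) b :=
    hPMS.equiv.trans hcomm0 (hPMS.connect b a)
  -- chain of connected components
  have e1 : connectedComponent (mix 1 a b) = connectedComponent a :=
    connectedComponent_eq (hcc (mix 1 a b) a hconn1)
  have e2 : connectedComponent (mix 0 a b) = connectedComponent (mix 1 a b) :=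
    connectedComponent_eq (hrange.isPreconnected.subset_connectedComponent h0mem h1mem)
  have hb : b ∈ connectedComponent (mix 0 a b) := hcc (mix 0 a b) b hconn0
  rw [e2, e1] at hb
  exact hb
end

section
/- Let ≿ on a procedural mixture set ⟨S, ⊕, ∼⟩ have a mixture entropy representation U with parameters q ∈ ℝ and r > 0. Then for every a ∈ S the following three statements are equivalent: (1) ≿ exhibits a negative (respectively positive) value of mixing at a; (2) ≿ exhibits a negative (respectively positive) value of mixing at μ a ⊕ (1−μ) a for every μ ∈ (0,1); (3) U(a)·(r−1) > q (respectively U(a)·(r−1) < q). -/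
open Real

/-- `R` exhibits a negative value of mixing at `a`: `a ≻ μ a ⊕ (1−μ) a` for all `μ ∈ (0,1)`. -/
def NegVM {S : Type*} (mix : ℝ → S → S → S) (R : S → S → Prop) (a : S) : Prop :=
  ∀ μ : ℝ, 0 < μ → μ < 1 → StrictRel R a (mix μ a a)

/-- `R` exhibits a positive value of mixing at `a`: `a ≺ μ a ⊕ (1−μ) a` for all `μ ∈ (0,1)`. -/
def PosVM {S : Type*} (mix : ℝ → S → S → S) (R : S → S → Prop) (a : S) : Prop :=
  ∀ μ : ℝ, 0 < μ → μ < 1 → StrictRel R (mix μ a a) a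


lemma hent_pos {r μ : ℝ} (hr : 0 < r) (h0 : 0 < μ) (h1 : μ < 1) : 0 < Hent r μ := by
  unfold Hent
  have h0' : 0 < 1 - μ := by linarith
  split_ifs with h
  · have l1 : Real.log μ < 0 := Real.log_neg h0 h1
    have l2 : Real.log (1 - μ) < 0 := Real.log_neg h0' (by linarith)
    nlinarith
  · rcases lt_or_gt_of_ne h with hlt | hgt
    · have a1 : μ < μ ^ r := by
        calc μ = μ ^ (1:ℝ) := (Real.rpow_one μ).symm
        _ < μ ^ r := Real.rpow_lt_rpow_of_exponent_gt h0 h1 hlt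
      have a2 : 1 - μ < (1 - μ) ^ r := by
        calc 1 - μ = (1 - μ) ^ (1:ℝ) := (Real.rpow_one _).symm
        _ < (1 - μ) ^ r := Real.rpow_lt_rpow_of_exponent_gt h0' (by linarith) hlt
      apply div_pos_of_neg_of_neg <;> linarith
    · have a1 : μ ^ r < μ := by
        calc μ ^ r < μ ^ (1:ℝ) := Real.rpow_lt_rpow_of_exponent_gt h0 h1 hgt
        _ = μ := Real.rpow_one μ
      have a2 : (1 - μ) ^ r < 1 - μ := by
        calc (1 - μ) ^ r < (1 - μ) ^ (1:ℝ) := Real.rpow_lt_rpow_of_exponent_gt h0' (by linarith) hgt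
        _ = 1 - μ := Real.rpow_one _
      apply div_pos <;> linarith

lemma hent_sum (r μ : ℝ) : μ ^ r + (1 - μ) ^ r = 1 - Hent r μ * (r - 1) := by
  unfold Hent
  split_ifs with h
  · subst h
    rw [Real.rpow_one, Real.rpow_one]; ring
  · have : r - 1 ≠ 0 := sub_ne_zero.mpr h
    field_simp
    ring

/-- Proposition: monotone mixing: for a mixture entropy value, the
negative (resp. positive) value of mixing at `a`, at all self-mixtures of `a`, and the
inequality `U(a)(r−1) > q` (resp. `<`) are equivalent. -/
theorem monotone_mixing
    {S : Type*} (mix : ℝ → S → S → S) (R : S → S → Prop)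
    (U : S → ℝ) (q r : ℝ)
    (hPMS : IsPMS mix (Indiff R)) (hr : 0 < r) (hrep : MixEntRep mix R U q r) (a : S) :
    ((NegVM mix R a ↔ ∀ μ : ℝ, 0 < μ → μ < 1 → NegVM mix R (mix μ a a)) ∧
      (NegVM mix R a ↔ U a * (r - 1) > q)) ∧
    ((PosVM mix R a ↔ ∀ μ : ℝ, 0 < μ → μ < 1 → PosVM mix R (mix μ a a)) ∧
      (PosVM mix R a ↔ U a * (r - 1) < q)) := by
  obtain ⟨hR, hU⟩ := hrep
  have hstrict : ∀ x y : S, StrictRel R x y ↔ U y < U x := by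
    intro x y
    constructor
    · rintro ⟨p1, p2⟩
      exact lt_of_le_of_ne ((hR x y).mp p1) (fun he => p2 ((hR y x).mpr he.ge))
    · intro h
      exact ⟨(hR x y).mpr h.le, fun p2 => absurd ((hR y x).mp p2) (not_le.mpr h)⟩
  have hdiff : ∀ b : S, ∀ μ : ℝ, 0 ≤ μ → μ ≤ 1 →
      U (mix μ b b) = U b - Hent r μ * (U b * (r - 1) - q) := by
    intro b μ h0 h1
    rw [hU b b μ h0 h1]
    linear_combination U b * hent_sum r μ
  have hneg : ∀ b : S, NegVM mix R b ↔ U b * (r - 1) > q := by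
    intro b
    constructor
    · intro h
      have h2 := (hstrict _ _).mp (h (1/2) (by norm_num) (by norm_num))
      rw [hdiff b (1/2) (by norm_num) (by norm_num)] at h2
      have hp := hent_pos (r := r) (μ := 1/2) hr (by norm_num) (by norm_num)
      nlinarith
    · intro h μ h0 h1
      rw [hstrict, hdiff b μ h0.le h1.le]
      have hp := hent_pos hr h0 h1
      nlinarith
  have hpos : ∀ b : S, PosVM mix R b ↔ U b * (r - 1) < q := by
    intro b
    constructor
    · intro h
      have h2 := (hstrict _ _).mp (h (1/2) (by norm_num) (by norm_num))
      rw [hdiff b (1/2) (by norm_num) (by norm_num)] at h2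
      have hp := hent_pos (r := r) (μ := 1/2) hr (by norm_num) (by norm_num)
      nlinarith
    · intro h μ h0 h1
      rw [hstrict, hdiff b μ h0.le h1.le]
      have hp := hent_pos hr h0 h1
      nlinarith
  have hkey : ∀ μ : ℝ, 0 < μ → μ < 1 →
      U (mix μ a a) * (r - 1) - q = (μ ^ r + (1 - μ) ^ r) * (U a * (r - 1) - q) := by
    intro μ h0 h1
    rw [hdiff a μ h0.le h1.le, hent_sum r μ]
    ring
  have hcoef : ∀ μ : ℝ, 0 < μ → μ < 1 → 0 < μ ^ r + (1 - μ) ^ r := by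
    intro μ h0 h1
    have p1 : (0:ℝ) < μ ^ r := Real.rpow_pos_of_pos h0 r
    have p2 : (0:ℝ) < (1 - μ) ^ r := Real.rpow_pos_of_pos (by linarith) r
    linarith
  refine ⟨⟨⟨fun h μ h0 h1 => ?_, fun h => ?_⟩, hneg a⟩,
    ⟨⟨fun h μ h0 h1 => ?_, fun h => ?_⟩, hpos a⟩⟩
  · rw [hneg]
    have := (hneg a).mp h
    have hk := hkey μ h0 h1
    have hc := hcoef μ h0 h1
    nlinarith
  · have h2 := (hneg _).mp (h (1/2) (by norm_num) (by norm_num))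
    have hk := hkey (1/2) (by norm_num) (by norm_num)
    have hc := hcoef (1/2) (by norm_num) (by norm_num)
    rw [hneg]
    nlinarith
  · rw [hpos]
    have := (hpos a).mp h
    have hk := hkey μ h0 h1
    have hc := hcoef μ h0 h1
    nlinarith
  · have h2 := (hpos _).mp (h (1/2) (by norm_num) (by norm_num))
    have hk := hkey (1/2) (by norm_num) (by norm_num)
    have hc := hcoef (1/2) (by norm_num) (by norm_num)
    rw [hpos]
    nlinarith
end

section
/- Let 0 < r < s and let α, β, γ ∈ (0, 1/2]. If R_r(α) = R_r(β) + R_r(γ), then R_s(α) > R_s(β) + R_s(γ), where R_t denotes the binary Rényi entropy of order t. -/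
open Real

/-!
Put `α = sigmoid (-u)` with `u ≥ 0`; then `R_t(α) = renyiLogit t u`, and `-∂ᵤ log R_t(u)` equals
`K_t(u) = (p t - p 1) / (q t - q 1)` for `p t = sigmoid (t u)` and `q t = -softplus (t u) / t`.
Since `p' t / q' t = ψ (t u) / u`, where `ψ x = x * h x` and `h` is the hazard rate of the
log-concave density `x * sigmoid' x` on `(0, ∞)` (its tail is `binEntropy (sigmoid x)`), the
monotone l'Hôpital rule makes `t ↦ K_t(u)` strictly increasing. Hence for `r < s` both `R_r` and
`R_s / R_r` are strictly increasing in `α`. Now `R_r(α) = R_r(β) + R_r(γ)` forces `β, γ < α`, so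
`R_s(β) + R_s(γ) < (R_s(α) / R_r(α)) * (R_r(β) + R_r(γ)) = R_s(α)`.
-/

open Set Filter Topology

theorem mediant_mem_Ioo {a b c d : ℝ} (hb : 0 < b) (hd : 0 < d) (h : a / b < c / d) :
    (a + c) / (b + d) ∈ Ioo (a / b) (c / d) := by
  rw [div_lt_div_iff₀ hb hd] at h
  constructor
  · rw [div_lt_div_iff₀ hb (by positivity)]; linarith
  · rw [div_lt_div_iff₀ (by positivity) hd]; linarith

section CauchyQuotient

variable {f g f' g' : ℝ → ℝ} {D : Set ℝ}

theorem Set.OrdConnected.strictMonoOn_of_hasDerivAt_pos (hD : D.OrdConnected)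
    (hg : ∀ x ∈ D, HasDerivAt g (g' x) x) (hg' : ∀ x ∈ D, 0 < g' x) : StrictMonoOn g D :=
  strictMonoOn_of_hasDerivWithinAt_pos hD.convex
    (fun x hx => (hg x hx).continuousAt.continuousWithinAt)
    (fun x hx => (hg x (interior_subset hx)).hasDerivWithinAt)
    (fun x hx => hg' x (interior_subset hx))

theorem sub_div_sub_mem_Ioo_of_strictMonoOn_div_deriv (hD : D.OrdConnected)
    (hf : ∀ x ∈ D, HasDerivAt f (f' x) x) (hg : ∀ x ∈ D, HasDerivAt g (g' x) x)
    (hg' : ∀ x ∈ D, 0 < g' x) (hρ : StrictMonoOn (fun x => f' x / g' x) D)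
    ⦃x y : ℝ⦄ (hx : x ∈ D) (hy : y ∈ D) (hxy : x < y) :
    (f y - f x) / (g y - g x) ∈ Ioo (f' x / g' x) (f' y / g' y) := by
  have hxyD : Icc x y ⊆ D := hD.out hx hy
  obtain ⟨c, ⟨hxc, hcy⟩, hc⟩ := exists_ratio_hasDerivAt_eq_ratio_slope f f' hxy
    (fun z hz => (hf z (hxyD hz)).continuousAt.continuousWithinAt)
    (fun z hz => hf z (hxyD (Ioo_subset_Icc_self hz))) g g'
    (fun z hz => (hg z (hxyD hz)).continuousAt.continuousWithinAt)
    (fun z hz => hg z (hxyD (Ioo_subset_Icc_self hz)))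
  have hcD : c ∈ D := hxyD ⟨hxc.le, hcy.le⟩
  have hgxy : 0 < g y - g x := sub_pos.2 (hD.strictMonoOn_of_hasDerivAt_pos hg hg' hx hy hxy)
  have hslope : (f y - f x) / (g y - g x) = f' c / g' c := by
    rw [div_eq_div_iff hgxy.ne' (hg' c hcD).ne']
    linarith
  rw [hslope]
  exact ⟨hρ hx hcD hxc, hρ hcD hy hcy⟩

theorem sub_div_sub_lt_of_strictMonoOn_div_deriv (hD : D.OrdConnected)
    (hf : ∀ x ∈ D, HasDerivAt f (f' x) x) (hg : ∀ x ∈ D, HasDerivAt g (g' x) x)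
    (hg' : ∀ x ∈ D, 0 < g' x) (hρ : StrictMonoOn (fun x => f' x / g' x) D)
    ⦃x y z : ℝ⦄ (hx : x ∈ D) (hy : y ∈ D) (hz : z ∈ D) (hxy : x < y) (hyz : y < z) :
    (f y - f x) / (g y - g x) < (f z - f x) / (g z - g x) ∧
      (f z - f x) / (g z - g x) < (f z - f y) / (g z - g y) := by
  have hg_mono := hD.strictMonoOn_of_hasDerivAt_pos hg hg'
  have hmid := (sub_div_sub_mem_Ioo_of_strictMonoOn_div_deriv hD hf hg hg' hρ hx hy hxy).2.trans
    (sub_div_sub_mem_Ioo_of_strictMonoOn_div_deriv hD hf hg hg' hρ hy hz hyz).1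
  have h := mediant_mem_Ioo (sub_pos.2 (hg_mono hx hy hxy)) (sub_pos.2 (hg_mono hy hz hyz)) hmid
  rwa [sub_add_sub_cancel', sub_add_sub_cancel'] at h

/-- The monotone form of l'Hôpital's rule. -/
theorem strictMonoOn_of_eq_sub_div_sub (hD : D.OrdConnected)
    (hf : ∀ x ∈ D, HasDerivAt f (f' x) x) (hg : ∀ x ∈ D, HasDerivAt g (g' x) x)
    (hg' : ∀ x ∈ D, 0 < g' x) (hρ : StrictMonoOn (fun x => f' x / g' x) D)
    {a : ℝ} (ha : a ∈ D) {K : ℝ → ℝ} (hKa : K a = f' a / g' a)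
    (hK : ∀ t ≠ a, K t = (f t - f a) / (g t - g a)) :
    StrictMonoOn K D := by
  have hK' : ∀ t ≠ a, K t = (f a - f t) / (g a - g t) := fun t ht => by
    rw [hK t ht, ← neg_sub, ← neg_sub (g a), neg_div_neg_eq]
  have two_point := sub_div_sub_mem_Ioo_of_strictMonoOn_div_deriv hD hf hg hg' hρ
  have three_point := sub_div_sub_lt_of_strictMonoOn_div_deriv hD hf hg hg' hρ
  intro x hx y hy hxy
  rcases lt_trichotomy y a with hya | rfl | hay
  · rw [hK' x (hxy.trans hya).ne, hK' y hya.ne]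
    exact (three_point hx hy ha hxy hya).2
  · rw [hK' x hxy.ne, hKa]
    exact (two_point hx hy hxy).2
  rcases lt_trichotomy x a with hxa | rfl | hax
  · rw [hK' x hxa.ne, hK y hay.ne']
    exact (two_point hx ha hxa).2.trans (two_point ha hy hay).1
  · rw [hK y hay.ne', hKa]
    exact (two_point hx hy hxy).1
  · rw [hK x hax.ne', hK y hay.ne']
    exact (three_point ha hx hy hax hxy).1

end CauchyQuotient

section HazardRate

theorem hasDerivAt_exp_mul_sub (c x y : ℝ) :
    HasDerivAt (fun y => exp (c * (y - x))) (c * exp (c * (y - x))) y :=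
  (((hasDerivAt_id' y).sub_const x).const_mul c).exp.congr_deriv (by ring)

variable {f f' F : ℝ → ℝ}

theorem le_mul_exp_of_deriv_le_mul {x c : ℝ} (hf : ∀ y ∈ Ici x, HasDerivAt f (f' y) y)
    (hle : ∀ y ∈ Ici x, f' y ≤ c * f y) {y : ℝ} (hy : y ∈ Ici x) :
    f y ≤ f x * exp (c * (y - x)) := by
  have hderiv : ∀ z ∈ Ici x, HasDerivAt (fun z => f z * exp (-c * (z - x)))
      ((f' z - c * f z) * exp (-c * (z - x))) z := fun z hz =>
    ((hf z hz).mul (hasDerivAt_exp_mul_sub (-c) x z)).congr_deriv (by ring)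
  have hanti : AntitoneOn (fun z => f z * exp (-c * (z - x))) (Ici x) :=
    antitoneOn_of_hasDerivWithinAt_nonpos (convex_Ici x)
      (fun z hz => (hderiv z hz).continuousAt.continuousWithinAt)
      (fun z hz => (hderiv z (interior_subset hz)).hasDerivWithinAt)
      (fun z hz => mul_nonpos_of_nonpos_of_nonneg
        (sub_nonpos.2 (hle z (interior_subset hz))) (exp_pos _).le)
  have h := hanti self_mem_Ici hy hy
  simp only [sub_self, mul_zero, exp_zero, mul_one] at h
  calc f y = f y * exp (-c * (y - x)) * exp (c * (y - x)) := by
        rw [mul_assoc, ← exp_add, neg_mul, neg_add_cancel, exp_zero, mul_one]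
    _ ≤ f x * exp (c * (y - x)) := mul_le_mul_of_nonneg_right h (exp_pos _).le

theorem le_div_neg_of_hasDerivAt_neg_of_le_mul_exp {x c M : ℝ} (hc : c < 0)
    (hF : ∀ y ∈ Ici x, HasDerivAt F (-f y) y) (hlim : Tendsto F atTop (𝓝 0))
    (hle : ∀ y ∈ Ici x, f y ≤ M * exp (c * (y - x))) :
    F x ≤ M / -c := by
  set G := fun y => F y - M / -c * exp (c * (y - x))
  have hderiv : ∀ y ∈ Ici x, HasDerivAt G (M * exp (c * (y - x)) - f y) y := fun y hy =>
    ((hF y hy).sub ((hasDerivAt_exp_mul_sub c x y).const_mul (M / -c))).congr_deriv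
      (by field_simp [hc.ne]; ring)
  have hmono : MonotoneOn G (Ici x) :=
    monotoneOn_of_hasDerivWithinAt_nonneg (convex_Ici x)
      (fun y hy => (hderiv y hy).continuousAt.continuousWithinAt)
      (fun y hy => (hderiv y (interior_subset hy)).hasDerivWithinAt)
      (fun y hy => sub_nonneg.2 (hle y (interior_subset hy)))
  have hG : Tendsto G atTop (𝓝 0) := by
    have hexp : Tendsto (fun y => exp (c * (y - x))) atTop (𝓝 0) :=
      tendsto_exp_atBot.comp
        ((tendsto_atTop_add_const_right _ (-x) tendsto_id).const_mul_atTop_of_neg hc)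
    simpa using hlim.sub (hexp.const_mul (M / -c))
  have hGx : G x ≤ 0 :=
    ge_of_tendsto hG (eventually_atTop.2 ⟨x, fun y hy => hmono self_mem_Ici hy hy⟩)
  simpa [G] using hGx

theorem pos_of_hasDerivAt_neg_of_tendsto_zero {x : ℝ} (hf : ∀ y ∈ Ici x, 0 < f y)
    (hF : ∀ y ∈ Ici x, HasDerivAt F (-f y) y) (hlim : Tendsto F atTop (𝓝 0)) : 0 < F x := by
  have hanti : StrictAntiOn F (Ici x) :=
    strictAntiOn_of_hasDerivWithinAt_neg (convex_Ici x)
      (fun y hy => (hF y hy).continuousAt.continuousWithinAt)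
      (fun y hy => (hF y (interior_subset hy)).hasDerivWithinAt)
      (fun y hy => neg_neg_of_pos (hf y (interior_subset hy)))
  have hx1 : x + 1 ∈ Ici x := by simp
  have h0 : 0 ≤ F (x + 1) := le_of_tendsto hlim (eventually_atTop.2 ⟨x + 1, fun y hy =>
    hanti.antitoneOn hx1 (mem_Ici.2 (by linarith [show x + 1 ≤ y from hy])) hy⟩)
  exact h0.trans_lt (hanti self_mem_Ici hx1 (by linarith))

/-- If `f'(x) < 0`, log-concavity gives `f y ≤ f x * exp (c * (y - x))` on `[x, ∞)` with
`c = f'(x) / f(x)`, and integrating this over `[x, ∞)` bounds the tail `F x` by `f x / (-c)`. -/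
theorem le_deriv_mul_add_sq_of_antitoneOn_logDeriv {x : ℝ}
    (hf : ∀ y ∈ Ici x, HasDerivAt f (f' y) y) (hf_pos : ∀ y ∈ Ici x, 0 < f y)
    (hF : ∀ y ∈ Ici x, HasDerivAt F (-f y) y) (hlim : Tendsto F atTop (𝓝 0))
    (hlog : AntitoneOn (fun y => f' y / f y) (Ici x)) :
    0 ≤ f' x * F x + f x ^ 2 := by
  have hfx := hf_pos x self_mem_Ici
  rcases le_or_gt 0 (f' x) with h | h
  · have := pos_of_hasDerivAt_neg_of_tendsto_zero hf_pos hF hlim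
    positivity
  set c := f' x / f x
  have hc : c < 0 := div_neg_of_neg_of_pos h hfx
  have hle : ∀ y ∈ Ici x, f' y ≤ c * f y := fun y hy => by
    rw [← div_le_iff₀ (hf_pos y hy)]
    exact hlog self_mem_Ici hy hy
  have hFx := le_div_neg_of_hasDerivAt_neg_of_le_mul_exp hc hF hlim
    (fun y hy => le_mul_exp_of_deriv_le_mul hf hle hy)
  rw [le_div_iff₀ (neg_pos.2 hc)] at hFx
  rw [show f' x = c * f x from (div_mul_cancel₀ _ hfx.ne').symm]
  nlinarith

theorem monotoneOn_div_of_antitoneOn_logDeriv {a : ℝ}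
    (hf : ∀ x ∈ Ioi a, HasDerivAt f (f' x) x) (hf_pos : ∀ x ∈ Ioi a, 0 < f x)
    (hF : ∀ x ∈ Ioi a, HasDerivAt F (-f x) x) (hlim : Tendsto F atTop (𝓝 0))
    (hlog : AntitoneOn (fun x => f' x / f x) (Ioi a)) :
    MonotoneOn (fun x => f x / F x) (Ioi a) := by
  have hsub : ∀ {x}, x ∈ Ioi a → Ici x ⊆ Ioi a := fun hx => Ici_subset_Ioi.2 hx
  have hF_pos : ∀ x ∈ Ioi a, 0 < F x := fun x hx =>
    pos_of_hasDerivAt_neg_of_tendsto_zero (fun y hy => hf_pos y (hsub hx hy))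
      (fun y hy => hF y (hsub hx hy)) hlim
  have hderiv : ∀ x ∈ Ioi a,
      HasDerivAt (fun x => f x / F x) ((f' x * F x + f x ^ 2) / F x ^ 2) x := fun x hx =>
    ((hf x hx).div (hF x hx) (hF_pos x hx).ne').congr_deriv (by ring)
  refine monotoneOn_of_hasDerivWithinAt_nonneg (convex_Ioi a)
    (fun x hx => (hderiv x hx).continuousAt.continuousWithinAt)
    (fun x hx => (hderiv x (interior_subset hx)).hasDerivWithinAt) (fun x hx => ?_)
  rw [interior_Ioi] at hx
  exact div_nonneg (le_deriv_mul_add_sq_of_antitoneOn_logDeriv (fun y hy => hf y (hsub hx hy))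
    (fun y hy => hf_pos y (hsub hx hy)) (fun y hy => hF y (hsub hx hy)) hlim
    (hlog.mono (hsub hx))) (sq_nonneg _)

end HazardRate

noncomputable def softplus (x : ℝ) : ℝ := log (1 + exp x)

theorem softplus_neg (x : ℝ) : softplus (-x) = softplus x - x := by
  rw [softplus, softplus, exp_neg, ← log_exp x, ← log_div (by positivity) (exp_pos x).ne', log_exp]
  congr 1
  field_simp
  ring

theorem log_sigmoid (x : ℝ) : log (sigmoid x) = -softplus (-x) := by
  rw [sigmoid_def, log_inv, softplus]

theorem hasDerivAt_softplus (x : ℝ) : HasDerivAt softplus (sigmoid x) x := by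
  show HasDerivAt (fun x => log (1 + exp x)) _ x
  convert ((hasDerivAt_exp x).const_add 1).log (by positivity) using 1
  rw [sigmoid_def, exp_neg]
  field_simp
  ring

theorem binEntropy_sigmoid (x : ℝ) : binEntropy (sigmoid x) = softplus x - x * sigmoid x := by
  rw [binEntropy, log_inv, log_inv, ← sigmoid_neg, log_sigmoid, log_sigmoid]
  simp only [neg_neg]
  rw [softplus_neg, sigmoid_neg]
  ring

theorem binEntropy_sigmoid_pos (x : ℝ) : 0 < binEntropy (sigmoid x) :=
  binEntropy_pos (sigmoid_pos x) (sigmoid_lt_one x)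

theorem tendsto_binEntropy_sigmoid_atTop :
    Tendsto (fun x => binEntropy (sigmoid x)) atTop (𝓝 0) := by
  have h := (binEntropy_continuous.tendsto 1).comp tendsto_sigmoid_atTop
  rwa [binEntropy_one] at h

theorem hasDerivAt_binEntropy_sigmoid (x : ℝ) :
    HasDerivAt (fun x => binEntropy (sigmoid x)) (-(x * (sigmoid x * (1 - sigmoid x)))) x := by
  simp only [binEntropy_sigmoid]
  exact ((hasDerivAt_softplus x).sub ((hasDerivAt_id' x).mul (hasDerivAt_sigmoid x))).congr_deriv
    (by ring)

theorem hasDerivAt_mul_sigmoid_mul_one_sub (x : ℝ) :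
    HasDerivAt (fun x => x * (sigmoid x * (1 - sigmoid x)))
      (sigmoid x * (1 - sigmoid x) * (1 + x * (1 - 2 * sigmoid x))) x :=
  ((hasDerivAt_id' x).mul ((hasDerivAt_sigmoid x).mul
    ((hasDerivAt_sigmoid x).const_sub 1))).congr_deriv (by simp only [Pi.mul_apply]; ring)

theorem monotoneOn_hazard_binEntropy_sigmoid :
    MonotoneOn (fun x => x * (sigmoid x * (1 - sigmoid x)) / binEntropy (sigmoid x)) (Ioi 0) := by
  refine monotoneOn_div_of_antitoneOn_logDeriv (fun x _ => hasDerivAt_mul_sigmoid_mul_one_sub x)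
    (fun x hx => mul_pos hx (mul_pos (sigmoid_pos x) (sub_pos.2 (sigmoid_lt_one x))))
    (fun x _ => hasDerivAt_binEntropy_sigmoid x) tendsto_binEntropy_sigmoid_atTop ?_
  have hlog : ∀ x ∈ Ioi (0 : ℝ), sigmoid x * (1 - sigmoid x) * (1 + x * (1 - 2 * sigmoid x)) /
      (x * (sigmoid x * (1 - sigmoid x))) = 1 / x + 1 - 2 * sigmoid x := fun x hx => by
    have := sigmoid_pos x
    have := sub_pos.2 (sigmoid_lt_one x)
    have hx : x ≠ 0 := (mem_Ioi.1 hx).ne'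
    field_simp
    ring
  intro x hx y hy hxy
  simp only [hlog x hx, hlog y hy]
  have := one_div_le_one_div_of_le hx hxy
  have := sigmoid_le hxy
  linarith

theorem strictMonoOn_mul_hazard_binEntropy_sigmoid :
    StrictMonoOn (fun x => x * (x * (sigmoid x * (1 - sigmoid x)) / binEntropy (sigmoid x)))
      (Ioi 0) := by
  intro x hx y hy hxy
  have hpos : 0 < x * (sigmoid x * (1 - sigmoid x)) / binEntropy (sigmoid x) :=
    div_pos (mul_pos hx (mul_pos (sigmoid_pos x) (sub_pos.2 (sigmoid_lt_one x))))
      (binEntropy_sigmoid_pos x)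
  calc x * (x * (sigmoid x * (1 - sigmoid x)) / binEntropy (sigmoid x))
      < y * (x * (sigmoid x * (1 - sigmoid x)) / binEntropy (sigmoid x)) :=
        mul_lt_mul_of_pos_right hxy hpos
    _ ≤ y * (y * (sigmoid y * (1 - sigmoid y)) / binEntropy (sigmoid y)) :=
        mul_le_mul_of_nonneg_left (monotoneOn_hazard_binEntropy_sigmoid hx hy hxy.le)
          (le_of_lt hy)

noncomputable def renyiLogit (t u : ℝ) : ℝ :=
  if t = 1 then binEntropy (sigmoid u) else (t * softplus u - softplus (t * u)) / (t - 1)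

noncomputable def renyiDecayRate (t u : ℝ) : ℝ :=
  if t = 1 then u * (sigmoid u * (1 - sigmoid u)) / binEntropy (sigmoid u)
  else (sigmoid (t * u) - sigmoid u) / (softplus u - softplus (t * u) / t)

section RenyiLogit

variable {t : ℝ} (u : ℝ)

theorem hasDerivAt_sigmoid_mul_const :
    HasDerivAt (fun t => sigmoid (t * u)) (u * (sigmoid (t * u) * (1 - sigmoid (t * u)))) t := by
  have h := (hasDerivAt_sigmoid (t * u)).comp t (hasDerivAt_mul_const u)
  exact h.congr_deriv (mul_comm _ _)

theorem hasDerivAt_neg_softplus_mul_const_div (ht : t ≠ 0) :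
    HasDerivAt (fun t => -softplus (t * u) / t) (binEntropy (sigmoid (t * u)) / t ^ 2) t := by
  have h := (((hasDerivAt_softplus (t * u)).comp t (hasDerivAt_mul_const u)).neg).div
    (hasDerivAt_id' t) ht
  rw [binEntropy_sigmoid]
  exact h.congr_deriv (by simp only [Function.comp_apply, Pi.neg_apply]; ring)

theorem strictMonoOn_neg_softplus_mul_const_div :
    StrictMonoOn (fun t => -softplus (t * u) / t) (Ioi 0) :=
  strictMonoOn_of_hasDerivWithinAt_pos (convex_Ioi 0)
    (fun _ ht => (hasDerivAt_neg_softplus_mul_const_div u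
      (ne_of_gt ht)).continuousAt.continuousWithinAt)
    (fun _ ht => (hasDerivAt_neg_softplus_mul_const_div u
      (ne_of_gt (interior_subset ht))).hasDerivWithinAt)
    (fun _ ht => div_pos (binEntropy_sigmoid_pos _) (pow_pos (interior_subset ht) 2))

theorem renyiLogit_eq_mul_slope (ht0 : t ≠ 0) (ht : t ≠ 1) :
    renyiLogit t u = t * slope (fun t => -softplus (t * u) / t) 1 t := by
  rw [renyiLogit, if_neg ht, slope_def_field, one_mul, div_one]
  field_simp
  ring

theorem renyiDecayRate_eq_slope_div_slope (ht : t ≠ 1) :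
    renyiDecayRate t u =
      slope (fun t => sigmoid (t * u)) 1 t / slope (fun t => -softplus (t * u) / t) 1 t := by
  rw [renyiDecayRate, if_neg ht, slope_def_field, slope_def_field, one_mul, div_one,
    div_div_div_cancel_right₀ (sub_ne_zero.2 ht)]
  ring

theorem renyiLogit_pos (ht : 0 < t) : 0 < renyiLogit t u := by
  rcases eq_or_ne t 1 with rfl | ht1
  · simpa [renyiLogit] using binEntropy_sigmoid_pos u
  rw [renyiLogit_eq_mul_slope u ht.ne' ht1]
  exact mul_pos ht
    ((strictMonoOn_neg_softplus_mul_const_div u).slope_pos (mem_Ioi.2 one_pos) ht ht1.symm)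

theorem renyiDecayRate_pos (ht : 0 < t) (hu : 0 < u) : 0 < renyiDecayRate t u := by
  rcases eq_or_ne t 1 with rfl | ht1
  · rw [renyiDecayRate, if_pos rfl]
    exact div_pos (mul_pos hu (mul_pos (sigmoid_pos u) (sub_pos.2 (sigmoid_lt_one u))))
      (binEntropy_sigmoid_pos u)
  rw [renyiDecayRate_eq_slope_div_slope u ht1]
  have hsig : StrictMonoOn (fun t => sigmoid (t * u)) (Ioi 0) := fun a _ b _ hab =>
    sigmoid_lt (mul_lt_mul_of_pos_right hab hu)
  exact div_pos (hsig.slope_pos (mem_Ioi.2 one_pos) ht ht1.symm)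
    ((strictMonoOn_neg_softplus_mul_const_div u).slope_pos (mem_Ioi.2 one_pos) ht ht1.symm)

theorem hasDerivAt_renyiLogit (ht : 0 < t) :
    HasDerivAt (renyiLogit t) (-(renyiDecayRate t u * renyiLogit t u)) u := by
  rcases eq_or_ne t 1 with rfl | ht1
  · have hfun : renyiLogit 1 = fun u => binEntropy (sigmoid u) := funext fun u => if_pos rfl
    rw [hfun, renyiDecayRate, if_pos rfl]
    beta_reduce
    rw [div_mul_cancel₀ _ (binEntropy_sigmoid_pos u).ne']
    exact hasDerivAt_binEntropy_sigmoid u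
  have hfun : renyiLogit t = fun u => (t * softplus u - softplus (t * u)) / (t - 1) :=
    funext fun u => if_neg ht1
  have hR := renyiLogit_pos u ht
  rw [renyiLogit, if_neg ht1] at hR
  have hne : t * softplus u - softplus (t * u) ≠ 0 := fun h => hR.ne' (by rw [h, zero_div])
  rw [hfun, renyiDecayRate, if_neg ht1]
  beta_reduce
  have h := (((hasDerivAt_softplus u).const_mul t).sub
    ((hasDerivAt_softplus (t * u)).comp u (hasDerivAt_const_mul t))).div_const (t - 1)
  refine h.congr_deriv ?_
  field_simp
  ring

end RenyiLogit

theorem strictMonoOn_renyiDecayRate {u : ℝ} (hu : 0 < u) :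
    StrictMonoOn (fun t => renyiDecayRate t u) (Ioi 0) := by
  have hρ : StrictMonoOn (fun t => u * (sigmoid (t * u) * (1 - sigmoid (t * u))) /
      (binEntropy (sigmoid (t * u)) / t ^ 2)) (Ioi 0) := by
    have hρ_eq : ∀ t ∈ Ioi (0 : ℝ), u * (sigmoid (t * u) * (1 - sigmoid (t * u))) /
        (binEntropy (sigmoid (t * u)) / t ^ 2) = t * u * (t * u * (sigmoid (t * u) *
          (1 - sigmoid (t * u))) / binEntropy (sigmoid (t * u))) / u := fun t ht => by
      have := (binEntropy_sigmoid_pos (t * u)).ne'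
      have := (mem_Ioi.1 ht).ne'
      field_simp
    intro a ha b hb hab
    beta_reduce
    rw [hρ_eq a ha, hρ_eq b hb]
    exact div_lt_div_of_pos_right (strictMonoOn_mul_hazard_binEntropy_sigmoid (mul_pos ha hu)
      (mul_pos hb hu) (mul_lt_mul_of_pos_right hab hu)) hu
  refine strictMonoOn_of_eq_sub_div_sub ordConnected_Ioi
    (fun _ _ => hasDerivAt_sigmoid_mul_const u)
    (fun _ ht => hasDerivAt_neg_softplus_mul_const_div u (ne_of_gt ht))
    (fun _ ht => div_pos (binEntropy_sigmoid_pos _) (pow_pos ht 2)) hρ (mem_Ioi.2 one_pos) ?_ ?_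
  · simp [renyiDecayRate]
  · intro t ht
    rw [renyiDecayRate_eq_slope_div_slope u ht, slope_def_field, slope_def_field,
      div_div_div_cancel_right₀ (sub_ne_zero.2 ht)]

theorem strictAntiOn_renyiLogit {t : ℝ} (ht : 0 < t) : StrictAntiOn (renyiLogit t) (Ici 0) :=
  strictAntiOn_of_hasDerivWithinAt_neg (convex_Ici 0)
    (fun u _ => (hasDerivAt_renyiLogit u ht).continuousAt.continuousWithinAt)
    (fun u _ => (hasDerivAt_renyiLogit u ht).hasDerivWithinAt)
    (fun u hu => by
      rw [interior_Ici] at hu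
      exact neg_neg_of_pos (mul_pos (renyiDecayRate_pos u ht hu) (renyiLogit_pos u ht)))

theorem strictAntiOn_renyiLogit_div {r s : ℝ} (hr : 0 < r) (hrs : r < s) :
    StrictAntiOn (fun u => renyiLogit s u / renyiLogit r u) (Ici 0) := by
  have hs : 0 < s := hr.trans hrs
  have hderiv : ∀ u, HasDerivAt (fun u => renyiLogit s u / renyiLogit r u)
      ((renyiDecayRate r u - renyiDecayRate s u) * (renyiLogit s u / renyiLogit r u)) u :=
    fun u => ((hasDerivAt_renyiLogit u hs).div (hasDerivAt_renyiLogit u hr)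
      (renyiLogit_pos u hr).ne').congr_deriv (by field_simp [(renyiLogit_pos u hr).ne']; ring)
  refine strictAntiOn_of_hasDerivWithinAt_neg (convex_Ici 0)
    (fun u _ => (hderiv u).continuousAt.continuousWithinAt)
    (fun u _ => (hderiv u).hasDerivWithinAt) (fun u hu => ?_)
  rw [interior_Ici] at hu
  exact mul_neg_of_neg_of_pos
    (sub_neg.2 (strictMonoOn_renyiDecayRate hu (mem_Ioi.2 hr) (mem_Ioi.2 hs) hrs))
    (div_pos (renyiLogit_pos u hs) (renyiLogit_pos u hr))

theorem renyiLogit_add_lt_of_eq_add {r s u v w : ℝ} (hr : 0 < r) (hrs : r < s)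
    (hu : u ∈ Ici 0) (hv : v ∈ Ici 0) (hw : w ∈ Ici 0)
    (h : renyiLogit r u = renyiLogit r v + renyiLogit r w) :
    renyiLogit s v + renyiLogit s w < renyiLogit s u := by
  have hs : 0 < s := hr.trans hrs
  set q := renyiLogit s u / renyiLogit r u
  have hlt : ∀ x ∈ Ici (0 : ℝ), renyiLogit r x < renyiLogit r u →
      renyiLogit s x < q * renyiLogit r x := fun x hx hx_lt => by
    have hux : u < x := (strictAntiOn_renyiLogit hr).lt_iff_gt hx hu |>.1 hx_lt
    rw [← div_lt_iff₀ (renyiLogit_pos x hr)]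
    exact strictAntiOn_renyiLogit_div hr hrs hu hx hux
  have hv' := hlt v hv (by linarith [renyiLogit_pos w hr])
  have hw' := hlt w hw (by linarith [renyiLogit_pos v hr])
  calc renyiLogit s v + renyiLogit s w < q * (renyiLogit r v + renyiLogit r w) := by linarith
    _ = renyiLogit s u := by rw [← h, div_mul_cancel₀ _ (renyiLogit_pos u hr).ne']

theorem Rent_sigmoid_neg (t u : ℝ) : Rent t (sigmoid (-u)) = renyiLogit t u := by
  rw [Rent, renyiLogit, sigmoid_neg, sub_sub_cancel]
  split_ifs with ht
  · rw [← binEntropy_one_sub, binEntropy, log_inv, log_inv, sub_sub_cancel]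
    ring
  · have hsum :
        (1 - sigmoid u) ^ t + sigmoid u ^ t = exp (-(t * softplus u)) * (1 + exp (t * u)) := by
      rw [← sigmoid_neg, rpow_def_of_pos (sigmoid_pos _), rpow_def_of_pos (sigmoid_pos _),
        log_sigmoid, log_sigmoid, neg_neg, softplus_neg, mul_add, mul_one, ← exp_add]
      congr 2 <;> ring
    have ht' : 1 - t ≠ 0 := sub_ne_zero.2 (Ne.symm ht)
    have ht'' : t - 1 ≠ 0 := sub_ne_zero.2 ht
    rw [hsum, log_mul (exp_pos _).ne' (by positivity), log_exp, ← softplus]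
    field_simp
    ring

theorem exists_mem_Ici_sigmoid_neg_eq {α : ℝ} (hα : α ∈ Ioc 0 (1 / 2)) :
    ∃ u ∈ Ici (0 : ℝ), sigmoid (-u) = α := by
  obtain ⟨hα0, hα2⟩ := hα
  refine ⟨log ((1 - α) / α), log_nonneg ?_, ?_⟩
  · rw [le_div_iff₀ hα0]; linarith
  · rw [sigmoid_def, neg_neg, exp_log (div_pos (by linarith) hα0)]
    field_simp
    ring

/-- Lemma: for `0 < r < s` and `α, β, γ ∈ (0, 1/2]`, if
`R_r(α) = R_r(β) + R_r(γ)` then `R_s(α) > R_s(β) + R_s(γ)` for the binary Rényi entropy. -/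
theorem renyi_additivity_lemma
    (r s α β γ : ℝ) (hr : 0 < r) (hrs : r < s)
    (hα : α ∈ Set.Ioc (0 : ℝ) (1/2)) (hβ : β ∈ Set.Ioc (0 : ℝ) (1/2))
    (hγ : γ ∈ Set.Ioc (0 : ℝ) (1/2))
    (heq : Rent r α = Rent r β + Rent r γ) :
    Rent s α > Rent s β + Rent s γ := by
  obtain ⟨u, hu, rfl⟩ := exists_mem_Ici_sigmoid_neg_eq hα
  obtain ⟨v, hv, rfl⟩ := exists_mem_Ici_sigmoid_neg_eq hβ
  obtain ⟨w, hw, rfl⟩ := exists_mem_Ici_sigmoid_neg_eq hγ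
  simp only [Rent_sigmoid_neg] at heq ⊢
  exact renyiLogit_add_lt_of_eq_add hr hrs hu hv hw heq
end
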